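/- Let G be a countable group and I a countable nonempty set, and let B⁰[G; I] be the Brandt semigroup over G with index set I. Then B⁰[G; I] is ℵ₀-categorical if and only if G is an ℵ₀-categorical group. -/

import Mathlib

/-- Two `n`-tuples of a semigroup are automorphically equivalent if some semigroup
automorphism maps one to the other componentwise. -/
def AutRel (S : Type*) [Semigroup S] {n : ℕ} (a b : Fin n → S) : Prop :=
  ∃ φ : S ≃* S, ∀ k, φ (a k) = b k

/-- A semigroup is ℵ₀-categorical if, for every `n ≥ 1`, the action of its automorphism
group on `n`-tuples has only finitely many orbits. -/
def Aleph0Categorical (S : Type*) [Semigroup S] : Prop :=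
  ∀ n : ℕ, 1 ≤ n → ∃ t : Set (Fin n → S), t.Finite ∧
    ∀ a : Fin n → S, ∃ b ∈ t, AutRel S b a

/-- The underlying set of the Brandt semigroup `B⁰[G; I]`: `(I × G × I) ∪ {0}`, the zero
being `none`. -/
abbrev Brandt (G I : Type*) : Type _ := Option (I × G × I)

open Classical in
/-- Multiplication of the Brandt semigroup `B⁰[G; I]`. -/
noncomputable def brandtMul {G I : Type*} [Group G] :
    Brandt G I → Brandt G I → Brandt G I
  | some (i, g, j), some (k, h, l) => if j = k then some (i, g * h, l) else none
  | _, _ => none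

noncomputable instance brandtSemigroup {G I : Type*} [Group G] : Semigroup (Brandt G I) where
  mul := brandtMul
  mul_assoc := by
    intro x y z
    show brandtMul (brandtMul x y) z = brandtMul x (brandtMul y z)
    rcases x with _ | ⟨i, g, j⟩ <;> rcases y with _ | ⟨k, h, l⟩ <;>
      rcases z with _ | ⟨m, p, q⟩ <;> simp only [brandtMul] <;>
      first
      | rfl
      | (by_cases h1 : j = k <;> by_cases h2 : l = m <;>
          simp [h1, h2, mul_assoc])
      | (by_cases h1 : j = k <;> simp [h1, mul_assoc])

/-!
An automorphism of `B⁰[G; I]` fixes `0`, and if it also fixes the idempotent `(i, 1, i)` it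
restricts to an automorphism of the corner `{i} × G × {i} ≅ G`. Hence `n`-tuples of `G` in
different orbits stay in different orbits of `B⁰[G; I]` after the idempotent is prepended.
Conversely, a permutation of `I` together with an automorphism of `G` acts on `B⁰[G; I]`;
since finite partial bijections of a countable set extend to permutations, the orbit of an
`n`-tuple is determined by its zero pattern, the equality pattern of its `2n` indices and the
orbit of its `n` group entries, which leaves finitely many possibilities.
-/

namespace AutRel

variable {S : Type*} [Semigroup S] {n : ℕ} {a b c : Fin n → S}

lemma symm (h : AutRel S a b) : AutRel S b a := by
  obtain ⟨φ, hφ⟩ := h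
  exact ⟨φ.symm, fun k => by rw [← hφ k, φ.symm_apply_apply]⟩

lemma trans (hab : AutRel S a b) (hbc : AutRel S b c) : AutRel S a c := by
  obtain ⟨φ, hφ⟩ := hab
  obtain ⟨ψ, hψ⟩ := hbc
  exact ⟨φ.trans ψ, fun k => by rw [MulEquiv.trans_apply, hφ, hψ]⟩

end AutRel

lemma Aleph0Categorical.exists_orbit_label {S : Type*} [Semigroup S]
    (h : Aleph0Categorical S) {n : ℕ} (hn : 1 ≤ n) :
    ∃ r : (Fin n → S) → Fin n → S, (Set.range r).Finite ∧
      ∀ a b, r a = r b → AutRel S a b := by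
  obtain ⟨t, ht, hrep⟩ := h n hn
  choose r hrt hr using hrep
  refine ⟨r, ht.subset (Set.range_subset_iff.2 hrt), fun a b hab => ?_⟩
  exact (hr a).symm.trans (hab ▸ hr b)

lemma exists_finite_representatives {A B : Type*} (R : A → A → Prop) (f : A → B)
    (hf : (Set.range f).Finite) (h : ∀ a b, f a = f b → R a b) :
    ∃ t : Set A, t.Finite ∧ ∀ a, ∃ b ∈ t, R b a := by
  have : Finite (Set.range f) := hf
  refine ⟨Set.range (Set.rangeSplitting f), Set.finite_range _, fun a => ?_⟩
  exact ⟨_, Set.mem_range_self ⟨f a, Set.mem_range_self a⟩, h _ _ (Set.apply_rangeSplitting f _)⟩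

open Cardinal in
/-- Countable sets are homogeneous: any bijection between finite subsets extends to a
permutation. -/
lemma exists_perm_apply_eq_of_eq_iff_eq {α ι : Type*} [Countable α] [Finite ι] (c d : ι → α)
    (h : ∀ p q, c p = c q ↔ d p = d q) : ∃ π : α ≃ α, ∀ p, π (c p) = d p := by
  have hd : ∀ p, d (Set.rangeSplitting c ⟨c p, Set.mem_range_self p⟩) = d p := fun p =>
    (h _ _).1 (Set.apply_rangeSplitting c _)
  let f : Set.range c ↪ α :=
    ⟨fun x => d (Set.rangeSplitting c x), fun x y hxy => Subtype.ext <|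
      (Set.apply_rangeSplitting c x).symm.trans
        (((h _ _).2 hxy).trans (Set.apply_rangeSplitting c y))⟩
  suffices ∃ π : α ≃ α, ∀ x : Set.range c, π x = f x from
    this.imp fun π hπ p => (hπ ⟨c p, Set.mem_range_self p⟩).trans (hd p)
  cases finite_or_infinite α
  · exact extend_function_finite f ⟨Equiv.refl α⟩
  · refine extend_function_of_lt f ?_ ⟨Equiv.refl α⟩
    rw [mk_eq_aleph0 α]
    exact (Set.finite_range c).lt_aleph0

lemma MulEquiv.exists_mulEquiv_of_mapsTo_range {M N : Type*} [Mul M] [Mul N] (f : N →ₙ* M)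
    (hf : Function.Injective f) (φ : M ≃* M) (hφ : Set.MapsTo φ (Set.range f) (Set.range f))
    (hφ' : Set.MapsTo φ.symm (Set.range f) (Set.range f)) :
    ∃ ψ : N ≃* N, ∀ x, φ (f x) = f (ψ x) := by
  choose ψ hψ using fun x => hφ (Set.mem_range_self (f := f) x)
  choose ψ' hψ' using fun x => hφ' (Set.mem_range_self (f := f) x)
  refine ⟨⟨⟨ψ, ψ', fun x => hf ?_, fun x => hf ?_⟩, fun x y => hf ?_⟩, fun x => (hψ x).symm⟩
  · rw [hψ', hψ, φ.symm_apply_apply]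
  · rw [hψ, hψ', φ.apply_symm_apply]
  · simp only [map_mul, hψ]

namespace Brandt

variable {G I : Type*} [Group G]

lemma some_mul_some_self (i j l : I) (g h : G) :
    (some (i, g, j) : Brandt G I) * some (j, h, l) = some (i, g * h, l) :=
  if_pos rfl

lemma some_mul_some_of_ne {i j k l : I} (hjk : j ≠ k) (g h : G) :
    (some (i, g, j) : Brandt G I) * some (k, h, l) = none :=
  if_neg hjk

lemma mul_none (x : Brandt G I) : x * none = none := by
  rcases x with _ | ⟨i, g, j⟩ <;> rfl

lemma none_mul (x : Brandt G I) : none * x = none := by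
  rcases x with _ | ⟨i, g, j⟩ <;> rfl

lemma mulEquiv_apply_none (φ : Brandt G I ≃* Brandt G I) : φ none = none := by
  calc φ none = φ (none * φ.symm none) := by rw [none_mul]
    _ = none := by rw [map_mul, φ.apply_symm_apply, mul_none]

/-- The maximal subgroup `{i} × G × {i}` of `B⁰[G; I]`, a copy of `G`. -/
def corner (i : I) : G →ₙ* Brandt G I where
  toFun g := some (i, g, i)
  map_mul' g h := (some_mul_some_self i i i g h).symm

lemma corner_apply (i : I) (g : G) : corner i g = (some (i, g, i) : Brandt G I) := rfl

lemma corner_injective (i : I) : Function.Injective (corner (G := G) i) := fun g h hgh => by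
  simpa [corner_apply] using hgh

lemma mem_range_corner_of_mul_mul {i : I} {x : Brandt G I} (hx : x ≠ none)
    (h : corner i 1 * x * corner i 1 = x) : x ∈ Set.range (corner i) := by
  obtain _ | ⟨k, g, l⟩ := x
  · exact absurd rfl hx
  have hk : k = i := by
    by_contra hk
    rw [corner_apply, some_mul_some_of_ne (Ne.symm hk), none_mul] at h
    exact Option.some_ne_none _ h.symm
  have hl : l = i := by
    by_contra hl
    rw [hk, corner_apply, some_mul_some_self, some_mul_some_of_ne hl] at h
    exact Option.some_ne_none _ h.symm
  exact ⟨g, by rw [hk, hl, corner_apply]⟩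

lemma mapsTo_range_corner {i : I} {φ : Brandt G I ≃* Brandt G I}
    (he : φ (corner i 1) = corner i 1) :
    Set.MapsTo φ (Set.range (corner i)) (Set.range (corner i)) := by
  rintro _ ⟨g, rfl⟩
  refine mem_range_corner_of_mul_mul (fun h => ?_) ?_
  · rw [← mulEquiv_apply_none φ] at h
    exact Option.some_ne_none _ (φ.injective h)
  · rw [← he, ← map_mul, ← map_mul, ← map_mul, ← map_mul, one_mul, mul_one]

lemma exists_mulEquiv_of_apply_corner_one {i : I} (φ : Brandt G I ≃* Brandt G I)
    (he : φ (corner i 1) = corner i 1) :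
    ∃ ψ : G ≃* G, ∀ g, φ (corner i g) = corner i (ψ g) := by
  have he' : φ.symm (corner i 1) = corner i 1 := by rw [φ.symm_apply_eq, he]
  exact MulEquiv.exists_mulEquiv_of_mapsTo_range _ (corner_injective i) φ
    (mapsTo_range_corner he) (mapsTo_range_corner he')

lemma autRel_of_autRel_cons_corner (i : I) {n : ℕ} {x y : Fin n → G}
    (h : AutRel (Brandt G I) (Fin.cons (corner i 1) (corner i ∘ x))
      (Fin.cons (corner i 1) (corner i ∘ y))) :
    AutRel G x y := by
  obtain ⟨φ, hφ⟩ := h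
  obtain ⟨ψ, hψ⟩ := exists_mulEquiv_of_apply_corner_one φ (by simpa using hφ 0)
  refine ⟨ψ, fun k => corner_injective i ?_⟩
  simpa [← hψ] using hφ k.succ

def mapMulEquiv (π : I ≃ I) (θ : G ≃* G) : Brandt G I ≃* Brandt G I where
  toFun := Option.map fun x => (π x.1, θ x.2.1, π x.2.2)
  invFun := Option.map fun x => (π.symm x.1, θ.symm x.2.1, π.symm x.2.2)
  left_inv := by rintro (_ | ⟨i, g, j⟩) <;> simp
  right_inv := by rintro (_ | ⟨i, g, j⟩) <;> simp
  map_mul' := by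
    rintro (_ | ⟨i, g, j⟩) (_ | ⟨k, h, l⟩)
    iterate 3 rfl
    by_cases hjk : j = k
    · subst hjk
      simp [some_mul_some_self]
    · simp [some_mul_some_of_ne hjk, some_mul_some_of_ne (π.injective.ne hjk)]

lemma mapMulEquiv_some (π : I ≃ I) (θ : G ≃* G) (i j : I) (g : G) :
    mapMulEquiv π θ (some (i, g, j)) = some (π i, θ g, π j) := rfl

def row (i₀ : I) : Brandt G I → I
  | some (i, _, _) => i
  | none => i₀

def col (i₀ : I) : Brandt G I → I
  | some (_, _, j) => j
  | none => i₀

def entry : Brandt G I → G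
  | some (_, g, _) => g
  | none => 1

def indices (i₀ : I) {n : ℕ} (a : Fin n → Brandt G I) : Fin n ⊕ Fin n → I :=
  Sum.elim (row i₀ ∘ a) (col i₀ ∘ a)

lemma mapMulEquiv_apply_eq {i₀ : I} {π : I ≃ I} {θ : G ≃* G} {x y : Brandt G I}
    (hzero : x.isSome = y.isSome) (hrow : π (row i₀ x) = row i₀ y)
    (hcol : π (col i₀ x) = col i₀ y) (hentry : θ (entry x) = entry y) :
    mapMulEquiv π θ x = y := by
  rcases x with _ | ⟨i, g, j⟩ <;> rcases y with _ | ⟨i', g', j'⟩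
  · exact mulEquiv_apply_none _
  iterate 2 exact absurd hzero (by simp)
  exact congrArg some (Prod.ext hrow (Prod.ext hentry hcol))

lemma autRel_of_eq_iff_eq [Countable I] (i₀ : I) {n : ℕ} {a b : Fin n → Brandt G I}
    (hzero : ∀ k, (a k).isSome = (b k).isSome)
    (hidx : ∀ p q, indices i₀ a p = indices i₀ a q ↔ indices i₀ b p = indices i₀ b q)
    (hentry : AutRel G (entry ∘ a) (entry ∘ b)) :
    AutRel (Brandt G I) a b := by
  obtain ⟨π, hπ⟩ := exists_perm_apply_eq_of_eq_iff_eq _ _ hidx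
  obtain ⟨θ, hθ⟩ := hentry
  exact ⟨mapMulEquiv π θ, fun k =>
    mapMulEquiv_apply_eq (hzero k) (hπ (.inl k)) (hπ (.inr k)) (hθ k)⟩

end Brandt

theorem brandt_aleph0Categorical_iff_general (G I : Type*) [Group G]
    [Countable I] [Nonempty I] :
    Aleph0Categorical (Brandt G I) ↔ Aleph0Categorical G := by
  obtain ⟨i₀⟩ := ‹Nonempty I›
  constructor
  · intro hB n _
    obtain ⟨r, hr, hra⟩ := hB.exists_orbit_label (Nat.le_add_left 1 n)
    let embed (x : Fin n → G) : Fin (n + 1) → Brandt G I :=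
      Fin.cons (Brandt.corner i₀ 1) (Brandt.corner i₀ ∘ x)
    refine exists_finite_representatives (AutRel G) (r ∘ embed)
      (hr.subset (Set.range_comp_subset_range _ _)) fun x y hxy => ?_
    exact Brandt.autRel_of_autRel_cons_corner i₀ (hra _ _ hxy)
  · intro hG n hn
    obtain ⟨r, hr, hra⟩ := hG.exists_orbit_label hn
    let invariant (a : Fin n → Brandt G I) :=
      (fun k => (a k).isSome, fun p q => Brandt.indices i₀ a p = Brandt.indices i₀ a q,
        r (Brandt.entry ∘ a))
    refine exists_finite_representatives (AutRel (Brandt G I)) invariant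
      ((Set.finite_univ.prod (Set.finite_univ.prod hr)).subset ?_) fun a b hab => ?_
    · rintro _ ⟨a, rfl⟩
      exact ⟨trivial, trivial, Set.mem_range_self _⟩
    · simp only [invariant, Prod.mk.injEq] at hab
      obtain ⟨hzero, hidx, hentry⟩ := hab
      exact Brandt.autRel_of_eq_iff_eq i₀ (congrFun hzero)
        (fun p q => .of_eq (congrFun₂ hidx p q)) (hra _ _ hentry)

/-- A Brandt semigroup `B⁰[G; I]` over a countable group `G` with a countable nonempty
index set `I` is ℵ₀-categorical iff the group `G` is ℵ₀-categorical. -/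
theorem brandt_aleph0Categorical_iff (G I : Type*) [Group G] [Countable G]
    [Countable I] [Nonempty I] :
    Aleph0Categorical (Brandt G I) ↔ Aleph0Categorical G :=
  brandt_aleph0Categorical_iff_general G I
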